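/- Let m ≤ n be positive integers and γ = (a_1,…,a_m) ∈ Γ(m,n) with γ ≠ (n−m+1,…,n), with block data k(0),…,k(t+1), tuples ζ_0,…,ζ_t and σ_1,…,σ_t, integers κ_0,…,κ_t, κ, κ', and sets S_h, T_h, U_h. Then for every h with 1 ≤ h ≤ κ−κ', the following two subsets of Γ(m,n) coincide: {β ∈ Γ(m,n) : β ≥ γ and β ≱ σ_k for every k ∈ U_h} and {ξ ⊔ ν : ξ, ν ∈ Γ(m,n), ξ ≥ γ, ν ≥ γ, ξ ≱ ζ_i for every i ∈ S_h, and ν ≱ ζ_j for every j ∈ T_h}. -/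

import Mathlib

open scoped BigOperators TensorProduct

set_option maxHeartbeats 1000000
set_option synthInstance.maxHeartbeats 400000

noncomputable section

/-- The trace ideal of an `R`-module `M`: the sum of the images of all
`R`-linear maps `M → R`. -/
def traceIdeal (R : Type*) [CommRing R] (M : Type*) [AddCommGroup M] [Module R M] :
    Ideal R :=
  ⨆ f : M →ₗ[R] R, LinearMap.range f

/-- `Γ(m,N)`: strictly increasing `m`-tuples with entries in `{1,…,N}`,
encoded as functions `Fin m → ℕ` and ordered componentwise. -/
def GammaSet (m N : ℕ) : Set (Fin m → ℕ) :=
  {a | StrictMono a ∧ ∀ i, 1 ≤ a i ∧ a i ≤ N}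

/-- Extended entries of a tuple `a ∈ Γ(m,N)`: `aext j = a_j` for `1 ≤ j ≤ m`
(1-based indexing) and `aext (m+1) = N+1`. -/
def aext (m N : ℕ) (a : Fin m → ℕ) (j : ℕ) : ℕ :=
  if h : j - 1 < m then a ⟨j - 1, h⟩ else N + 1

/-- Block data for `γ ∈ Γ(m,N)`: `k 0 = 0`, `k` is strictly increasing on
`{0,…,t+1}` and `k 1 < ⋯ < k (t+1)` lists exactly the indices `j ∈ {1,…,m}`
with `a_{j+1} - a_j > 1` (where `a_{m+1} = N+1`). -/
def IsBlockData (m N : ℕ) (a : Fin m → ℕ) (t : ℕ) (k : ℕ → ℕ) : Prop :=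
  k 0 = 0 ∧ (∀ i j, i < j → j ≤ t + 1 → k i < k j) ∧
    ∀ j, (∃ i, 1 ≤ i ∧ i ≤ t + 1 ∧ k i = j) ↔
      (1 ≤ j ∧ j ≤ m ∧ 1 < aext m N a (j + 1) - aext m N a j)

/-- `ζ_i`: the tuple `γ` with the entry `a_{k(i+1)}` replaced by `a_{k(i+1)} + 1`. -/
def zetaT (m : ℕ) (a : Fin m → ℕ) (k : ℕ → ℕ) (i : ℕ) : Fin m → ℕ :=
  fun j => if (j : ℕ) + 1 = k (i + 1) then a j + 1 else a j

/-- `σ_i`: the strictly increasing tuple whose entry set is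
`({a_1,…,a_m} ∖ {a_{k(i)}}) ∪ {a_{k(i+1)} + 1}`. -/
def sigmaT (m N : ℕ) (a : Fin m → ℕ) (k : ℕ → ℕ) (i : ℕ) : Fin m → ℕ :=
  fun j =>
    if (j : ℕ) + 1 < k i then a j
    else if (j : ℕ) + 1 < k (i + 1) then aext m N a ((j : ℕ) + 2)
    else if (j : ℕ) + 1 = k (i + 1) then a j + 1
    else a j

/-- `κ_i = Σ_{j=0}^{i} (k(j+1) − k(j)) + Σ_{j=i}^{t} (a_{k(j+1)+1} − a_{k(j+1)} − 1)`. -/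
def kappaT (m N : ℕ) (a : Fin m → ℕ) (t : ℕ) (k : ℕ → ℕ) (i : ℕ) : ℕ :=
  (∑ j ∈ Finset.range (i + 1), (k (j + 1) - k j)) +
    ∑ j ∈ Finset.Icc i t, (aext m N a (k (j + 1) + 1) - aext m N a (k (j + 1)) - 1)

/-- `κ = max_{0 ≤ i ≤ t} κ_i`. -/
def kappaMax (m N : ℕ) (a : Fin m → ℕ) (t : ℕ) (k : ℕ → ℕ) : ℕ :=
  (Finset.range (t + 1)).sup (kappaT m N a t k)

/-- `κ' = min_{0 ≤ i ≤ t} κ_i`. -/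
def kappaMin (m N : ℕ) (a : Fin m → ℕ) (t : ℕ) (k : ℕ → ℕ) : ℕ :=
  (Finset.range (t + 1)).inf' (Finset.nonempty_range_iff.mpr (Nat.succ_ne_zero t))
    (kappaT m N a t k)

/-- `i ∈ S_h`, i.e. `κ − κ_i ≥ h`. -/
def memS (m N : ℕ) (a : Fin m → ℕ) (t : ℕ) (k : ℕ → ℕ) (h i : ℕ) : Prop :=
  h ≤ kappaMax m N a t k - kappaT m N a t k i

/-- `i ∈ U_h`: `1 ≤ i ≤ t` and exactly one of `i-1`, `i` belongs to `S_h`. -/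
def memU (m N : ℕ) (a : Fin m → ℕ) (t : ℕ) (k : ℕ → ℕ) (h i : ℕ) : Prop :=
  1 ≤ i ∧ i ≤ t ∧ ¬ (memS m N a t k h i ↔ memS m N a t k h (i - 1))

/-- The maximal minor `[a]` of the generic `m × n` matrix `(X_{uv})`
(rows `1,…,m`, columns `a_1,…,a_m`), inside `B[X_{ij} : i,j ≥ 1]`. -/
def minor (B : Type*) [CommRing B] (m : ℕ) (a : Fin m → ℕ) : MvPolynomial (ℕ × ℕ) B :=
  (Matrix.of fun u v : Fin m => MvPolynomial.X ((u : ℕ) + 1, a v)).det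

/-- `G_B(X)`: the `B`-subalgebra generated by all maximal minors `[a]`, `a ∈ Γ(m,n)`. -/
def schubertAlgebra (B : Type*) [CommRing B] (m n : ℕ) :
    Subalgebra B (MvPolynomial (ℕ × ℕ) B) :=
  Algebra.adjoin B ((fun a => minor B m a) '' GammaSet m n)

lemma minor_mem (B : Type*) [CommRing B] (m n : ℕ) {a : Fin m → ℕ}
    (ha : a ∈ GammaSet m n) : minor B m a ∈ schubertAlgebra B m n :=
  Algebra.subset_adjoin ⟨a, ha, rfl⟩

/-- `J_B(X; γ)`: the ideal of `G_B(X)` generated by all `[δ]` with `δ ≱ γ`. -/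
def JIdeal (B : Type*) [CommRing B] (m n : ℕ) (γ : Fin m → ℕ) :
    Ideal (schubertAlgebra B m n) :=
  Ideal.span {x | ∃ a ∈ GammaSet m n, ¬ γ ≤ a ∧
    (x : MvPolynomial (ℕ × ℕ) B) = minor B m a}

/-- The Schubert cycle `G_B(X; γ) = G_B(X)/J_B(X;γ)`. -/
abbrev SchubertCycle (B : Type*) [CommRing B] (m n : ℕ) (γ : Fin m → ℕ) :=
  schubertAlgebra B m n ⧸ JIdeal B m n γ

/-- `J_B(x; δ) = J_B(X;δ)/J_B(X;γ)`, an ideal of `G_B(X;γ)`. -/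
def JxIdeal (B : Type*) [CommRing B] (m n : ℕ) (γ δ : Fin m → ℕ) :
    Ideal (SchubertCycle B m n γ) :=
  (JIdeal B m n δ).map (Ideal.Quotient.mk (JIdeal B m n γ))

end

/-
For `β ≥ γ` strictly increasing and `1 ≤ i ≤ t`, one has `β ≥ σ_i` exactly when
`β_{k(i)} ≥ a_{k(i)+1}`: the entries of `γ` inside a block are consecutive, so once the last
entry of block `i - 1` has been pushed onto the first entry of block `i`, strict monotonicity
pushes the whole of block `i` up by one. This criterion is a bound on a single coordinate, so
`ξ ⊔ ν ≥ σ_i` forces `ξ ≥ σ_i` or `ν ≥ σ_i`; and `σ_i` dominates both `ζ_{i-1}` and `ζ_i`.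
For `i ∈ U_h` one of `i - 1, i` lies in `S_h` and the other in `T_h`, which gives one inclusion.

Conversely, split `β` into `ξ`, equal to `γ` on the blocks indexed by `S_h` and to `β` elsewhere,
and `ν`, defined likewise with `T_h`. Then `ξ ⊔ ν = β`, and `ξ`, `ν` avoid the required `ζ`'s.
They are strictly increasing because at a block boundary `k(i)` where `ξ` (or `ν`) switches from
`β` to `γ`, the index `i` lies in `U_h`, and `β ≱ σ_i` says precisely `β_{k(i)} < a_{k(i)+1}`.
-/

section GammaSet

variable {m N : ℕ}

lemma aext_of_sub_one_lt (a : Fin m → ℕ) {J : ℕ} (hJ : J - 1 < m) :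
    aext m N a J = a ⟨J - 1, hJ⟩ :=
  dif_pos hJ

lemma aext_val_add_one (a : Fin m → ℕ) (j : Fin m) : aext m N a (j + 1) = a j := by
  simp [aext]

lemma aext_sup (a b : Fin m → ℕ) (J : ℕ) :
    aext m N (a ⊔ b) J = aext m N a J ⊔ aext m N b J := by
  unfold aext
  split_ifs <;> simp

lemma aext_lt_aext_succ {a : Fin m → ℕ} (ha : StrictMono a) {J : ℕ} (hJ1 : 1 ≤ J)
    (hJ2 : J < m) : aext m N a J < aext m N a (J + 1) := by
  rw [aext_of_sub_one_lt a (by omega), aext_of_sub_one_lt a (by omega)]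
  exact ha (Fin.mk_lt_mk.2 (by omega))

lemma lt_aext_add_two {a : Fin m → ℕ} (ha : a ∈ GammaSet m N) (j : Fin m) :
    a j < aext m N a (j + 2) := by
  unfold aext
  split_ifs with hj
  · exact ha.1 (Fin.mk_lt_mk.2 (by omega))
  · exact Nat.lt_succ_of_le (ha.2 j).2

lemma strictMono_sup {a b : Fin m → ℕ} (ha : StrictMono a) (hb : StrictMono b) :
    StrictMono (a ⊔ b) :=
  fun _ _ hpq => max_lt ((ha hpq).trans_le le_sup_left) ((hb hpq).trans_le le_sup_right)

lemma sup_mem_gammaSet {a b : Fin m → ℕ} (ha : a ∈ GammaSet m N) (hb : b ∈ GammaSet m N) :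
    a ⊔ b ∈ GammaSet m N :=
  ⟨strictMono_sup ha.1 hb.1, fun j => ⟨(ha.2 j).1.trans le_sup_left, sup_le (ha.2 j).2 (hb.2 j).2⟩⟩

lemma mem_gammaSet_of_mono {a b c : Fin m → ℕ} (ha : a ∈ GammaSet m N)
    (hc : c ∈ GammaSet m N) (hb : StrictMono b) (hab : a ≤ b) (hbc : b ≤ c) :
    b ∈ GammaSet m N :=
  ⟨hb, fun j => ⟨(ha.2 j).1.trans (hab j), (hbc j).trans (hc.2 j).2⟩⟩

lemma strictMono_of_lt_of_val_eq_add_one {f : Fin m → ℕ}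
    (hf : ∀ p q : Fin m, (q : ℕ) = p + 1 → f p < f q) : StrictMono f := by
  cases m with
  | zero => exact fun p => p.elim0
  | succ m => exact Fin.strictMono_iff_lt_succ.2 fun i => hf _ _ (by simp)

end GammaSet

namespace IsBlockData

variable {m N t : ℕ} {γ : Fin m → ℕ} {k : ℕ → ℕ}

lemma gap (hbd : IsBlockData m N γ t k) {i : ℕ} (hi1 : 1 ≤ i) (hi2 : i ≤ t + 1) :
    1 ≤ k i ∧ k i ≤ m ∧ 1 < aext m N γ (k i + 1) - aext m N γ (k i) :=
  (hbd.2.2 (k i)).mp ⟨i, hi1, hi2, rfl⟩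

lemma lt_succ (hbd : IsBlockData m N γ t k) {i : ℕ} (hi : i ≤ t) : k i < k (i + 1) :=
  hbd.2.1 i (i + 1) (by omega) (by omega)

lemma mono (hbd : IsBlockData m N γ t k) {i j : ℕ} (hij : i ≤ j) (hj : j ≤ t + 1) :
    k i ≤ k j := by
  rcases hij.eq_or_lt with rfl | hlt
  · rfl
  · exact (hbd.2.1 i j hlt hj).le

lemma eq_of_mem_block (hbd : IsBlockData m N γ t k) {i i' J : ℕ} (hi : i ≤ t) (hi' : i' ≤ t)
    (hJ1 : k i ≤ J) (hJ2 : J < k (i + 1)) (hJ1' : k i' ≤ J) (hJ2' : J < k (i' + 1)) :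
    i = i' := by
  by_contra hne
  rcases Nat.lt_or_gt_of_ne hne with hlt | hlt
  · have := hbd.mono (show i + 1 ≤ i' by omega) (by omega)
    omega
  · have := hbd.mono (show i' + 1 ≤ i by omega) (by omega)
    omega

lemma aext_succ_eq (hγ : StrictMono γ) (hbd : IsBlockData m N γ t k) {i J : ℕ} (hi : i ≤ t)
    (hJ1 : k i < J) (hJ2 : J < k (i + 1)) :
    aext m N γ (J + 1) = aext m N γ J + 1 := by
  have hkm := (hbd.gap (show 1 ≤ i + 1 by omega) (by omega)).2.1
  have hlt := aext_lt_aext_succ (N := N) hγ (show 1 ≤ J by omega) (by omega)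
  have hno_gap : ¬ 1 < aext m N γ (J + 1) - aext m N γ J := by
    intro hgap
    obtain ⟨l, hl1, hl2, rfl⟩ := (hbd.2.2 J).mpr ⟨by omega, by omega, hgap⟩
    rcases le_or_gt l i with hli | hil
    · have := hbd.mono hli (by omega)
      omega
    · have := hbd.mono (show i + 1 ≤ l by omega) hl2
      omega
  omega

lemma aext_succ_le (hγ : StrictMono γ) (hbd : IsBlockData m N γ t k) {β : Fin m → ℕ}
    (hβ : StrictMono β) {i : ℕ} (hi1 : 1 ≤ i) (hi2 : i ≤ t)
    (hkey : aext m N γ (k i + 1) ≤ aext m N β (k i)) {J : ℕ} (hJ1 : k i ≤ J)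
    (hJ2 : J < k (i + 1)) : aext m N γ (J + 1) ≤ aext m N β J := by
  induction J, hJ1 using Nat.le_induction with
  | base => exact hkey
  | succ J hJ ih =>
    -- `γ` grows by exactly one inside the block, `β` by at least one.
    have hki := (hbd.gap hi1 (by omega)).1
    have hkm := (hbd.gap (show 1 ≤ i + 1 by omega) (by omega)).2.1
    have hβJ := aext_lt_aext_succ (N := N) hβ (show 1 ≤ J by omega) (by omega)
    rw [hbd.aext_succ_eq hγ hi2 (by omega) hJ2]
    have := ih (by omega)
    omega

end IsBlockData

section Tuples

variable {m N t : ℕ} {γ : Fin m → ℕ} {k : ℕ → ℕ}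

lemma le_sigmaT (hγ : γ ∈ GammaSet m N) (i : ℕ) : γ ≤ sigmaT m N γ k i := by
  intro j
  simp only [sigmaT]
  split_ifs
  · rfl
  · exact (lt_aext_add_two hγ j).le
  · exact Nat.le_succ _
  · rfl

lemma zetaT_le_sigmaT (hγ : γ ∈ GammaSet m N) {i : ℕ} (hk : k i < k (i + 1)) :
    zetaT m γ k i ≤ sigmaT m N γ k i := by
  intro j
  by_cases hj : (j : ℕ) + 1 = k (i + 1)
  · simp [zetaT, sigmaT, hj, show ¬ k (i + 1) < k i by omega]
  · simpa [zetaT, hj] using le_sigmaT hγ i j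

lemma zetaT_le_sigmaT_succ (hγ : γ ∈ GammaSet m N) {i : ℕ} (hk : k (i + 1) < k (i + 2)) :
    zetaT m γ k i ≤ sigmaT m N γ k (i + 1) := by
  intro j
  by_cases hj : (j : ℕ) + 1 = k (i + 1)
  · simpa [zetaT, sigmaT, hj, hk] using lt_aext_add_two hγ j
  · simpa [zetaT, hj] using le_sigmaT hγ (i + 1) j

lemma sigmaT_le_iff (hγ : StrictMono γ) (hbd : IsBlockData m N γ t k) {β : Fin m → ℕ}
    (hβ : StrictMono β) (hγβ : γ ≤ β) {i : ℕ} (hi1 : 1 ≤ i) (hi2 : i ≤ t) :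
    sigmaT m N γ k i ≤ β ↔ aext m N γ (k i + 1) ≤ aext m N β (k i) := by
  have hki := (hbd.gap hi1 (by omega)).1
  have hkk := hbd.lt_succ hi2
  have hkm := (hbd.gap (show 1 ≤ i + 1 by omega) (by omega)).2.1
  constructor
  · intro hσ
    have := hσ ⟨k i - 1, by omega⟩
    simp only [sigmaT, show k i - 1 + 1 = k i by omega, lt_irrefl, hkk, if_false,
      if_true] at this
    rwa [aext_of_sub_one_lt β (by omega), show k i + 1 = k i - 1 + 2 by omega]
  · intro hkey j
    have hblock := fun J => hbd.aext_succ_le hγ hβ hi1 hi2 hkey (J := J)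
    simp only [sigmaT]
    split_ifs with h1 h2 h3
    · exact hγβ j
    · simpa [aext_val_add_one] using hblock (j + 1) (by omega) h2
    · have hγj := hblock j (by omega) (by omega)
      rw [aext_val_add_one, aext_of_sub_one_lt β (by omega)] at hγj
      have := hβ (show (⟨j - 1, by omega⟩ : Fin m) < j from Fin.mk_lt_mk.2 (by omega))
      omega
    · exact hγβ j

lemma sigmaT_le_or_of_le_sup (hγ : StrictMono γ) (hbd : IsBlockData m N γ t k)
    {ξ ν : Fin m → ℕ} (hξ : StrictMono ξ) (hν : StrictMono ν) (hγξ : γ ≤ ξ) (hγν : γ ≤ ν)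
    {i : ℕ} (hi1 : 1 ≤ i) (hi2 : i ≤ t) (hσ : sigmaT m N γ k i ≤ ξ ⊔ ν) :
    sigmaT m N γ k i ≤ ξ ∨ sigmaT m N γ k i ≤ ν := by
  rw [sigmaT_le_iff hγ hbd (strictMono_sup hξ hν) (hγξ.trans le_sup_left) hi1 hi2,
    aext_sup] at hσ
  rw [sigmaT_le_iff hγ hbd hξ hγξ hi1 hi2, sigmaT_le_iff hγ hbd hν hγν hi1 hi2]
  exact le_sup_iff.1 hσ

end Tuples

section BlockMix

open Classical

variable {m N t : ℕ} {γ : Fin m → ℕ} {k : ℕ → ℕ}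

/-- The (0-based) positions of the blocks `a_{k(i)+1}, …, a_{k(i+1)}` whose index `i` satisfies
`P`. -/
def blockSet (k : ℕ → ℕ) (t : ℕ) (P : ℕ → Prop) : Set (Fin m) :=
  {j | ∃ i ≤ t, k i ≤ j ∧ (j : ℕ) < k (i + 1) ∧ P i}

noncomputable def blockMix (k : ℕ → ℕ) (t : ℕ) (P : ℕ → Prop) (γ β : Fin m → ℕ) : Fin m → ℕ :=
  (blockSet k t P).piecewise γ β

lemma blockMix_of_mem {P : ℕ → Prop} {β : Fin m → ℕ} {j : Fin m} (hj : j ∈ blockSet k t P) :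
    blockMix k t P γ β j = γ j :=
  Set.piecewise_eq_of_mem _ _ _ hj

lemma blockMix_of_notMem {P : ℕ → Prop} {β : Fin m → ℕ} {j : Fin m} (hj : j ∉ blockSet k t P) :
    blockMix k t P γ β j = β j :=
  Set.piecewise_eq_of_notMem _ _ _ hj

lemma le_blockMix {β : Fin m → ℕ} (hγβ : γ ≤ β) (P : ℕ → Prop) : γ ≤ blockMix k t P γ β :=
  Set.le_piecewise (fun _ _ => le_rfl) fun j _ => hγβ j

lemma blockMix_le {β : Fin m → ℕ} (hγβ : γ ≤ β) (P : ℕ → Prop) : blockMix k t P γ β ≤ β :=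
  Set.piecewise_le (fun j _ => hγβ j) fun _ _ => le_rfl

lemma blockMix_sup_blockMix_not (hbd : IsBlockData m N γ t k) {β : Fin m → ℕ} (hγβ : γ ≤ β)
    (P : ℕ → Prop) : blockMix k t P γ β ⊔ blockMix k t (¬ P ·) γ β = β := by
  funext j
  by_cases hj : j ∈ blockSet k t P
  · have hj' : j ∉ blockSet k t (¬ P ·) := by
      rintro ⟨i', hi', hk1', hk2', hPi'⟩
      obtain ⟨i, hi, hk1, hk2, hPi⟩ := hj
      exact hPi' (hbd.eq_of_mem_block hi hi' hk1 hk2 hk1' hk2' ▸ hPi)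
    rw [Pi.sup_apply, blockMix_of_mem hj, blockMix_of_notMem hj']
    exact sup_eq_right.2 (hγβ j)
  · rw [Pi.sup_apply, blockMix_of_notMem hj]
    exact sup_eq_left.2 (blockMix_le hγβ _ j)

lemma zetaT_not_le_blockMix (hbd : IsBlockData m N γ t k) {P : ℕ → Prop} (β : Fin m → ℕ)
    {i : ℕ} (hi : i ≤ t) (hPi : P i) : ¬ zetaT m γ k i ≤ blockMix k t P γ β := by
  have hkk := hbd.lt_succ hi
  have hkm := (hbd.gap (show 1 ≤ i + 1 by omega) (by omega)).2.1
  set j : Fin m := ⟨k (i + 1) - 1, by omega⟩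
  have hj : j ∈ blockSet k t P := ⟨i, hi, by simp [j]; omega, by simp [j]; omega, hPi⟩
  intro hζ
  have := hζ j
  rw [blockMix_of_mem hj] at this
  simp [zetaT, j, show k (i + 1) - 1 + 1 = k (i + 1) by omega] at this

lemma strictMono_blockMix (hγ : StrictMono γ) (hbd : IsBlockData m N γ t k) {P : ℕ → Prop}
    {β : Fin m → ℕ} (hβ : StrictMono β) (hγβ : γ ≤ β)
    (hP : ∀ i < t, P (i + 1) → ¬ P i → ¬ sigmaT m N γ k (i + 1) ≤ β) :
    StrictMono (blockMix k t P γ β) := by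
  refine strictMono_of_lt_of_val_eq_add_one fun p q hpq => ?_
  have hγpq : γ p < γ q := hγ (Fin.lt_def.2 (by omega))
  have hβpq : β p < β q := hβ (Fin.lt_def.2 (by omega))
  by_cases hq : q ∈ blockSet k t P; swap
  · rw [blockMix_of_notMem hq]
    exact (blockMix_le hγβ P p).trans_lt hβpq
  by_cases hp : p ∈ blockSet k t P
  · rw [blockMix_of_mem hp, blockMix_of_mem hq]
    exact hγpq
  rw [blockMix_of_notMem hp, blockMix_of_mem hq]
  obtain ⟨i, hi, hkq, hqk, hPi⟩ := hq
  have hki : k i = q := by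
    by_contra hne
    exact hp ⟨i, hi, by omega, by omega, hPi⟩
  rcases i with _ | i
  · rw [hbd.1] at hki
    omega
  have hPi' : ¬ P i := fun hPi' =>
    hp ⟨i, by omega, by have := hbd.lt_succ (i := i) (by omega); omega, by omega, hPi'⟩
  have hkey := mt (sigmaT_le_iff hγ hbd hβ hγβ (by omega) hi).2 (hP i (by omega) hPi hPi')
  rw [hki, aext_val_add_one γ q, hpq, aext_val_add_one] at hkey
  omega

end BlockMix

theorem not_ge_sigma_set_eq_sup_set_general {m n : ℕ}
    (γ : Fin m → ℕ) (hγ : γ ∈ GammaSet m n)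
    (t : ℕ) (k : ℕ → ℕ) (hbd : IsBlockData m n γ t k)
    (h : ℕ) :
    {β | β ∈ GammaSet m n ∧ γ ≤ β ∧
        ∀ j, memU m n γ t k h j → ¬ sigmaT m n γ k j ≤ β} =
    {x | ∃ ξ ∈ GammaSet m n, ∃ ν ∈ GammaSet m n, γ ≤ ξ ∧ γ ≤ ν ∧
        (∀ i, i ≤ t → memS m n γ t k h i → ¬ zetaT m γ k i ≤ ξ) ∧
        (∀ j, j ≤ t → ¬ memS m n γ t k h j → ¬ zetaT m γ k j ≤ ν) ∧
        x = ξ ⊔ ν} := by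
  set S := memS m n γ t k h
  have hU : ∀ i < t, ¬ (S (i + 1) ↔ S i) → memU m n γ t k h (i + 1) :=
    fun i hi hSS => ⟨by omega, by omega, by simpa using hSS⟩
  ext x
  constructor
  · rintro ⟨hx, hγx, hσ⟩
    have hmix (P : ℕ → Prop) (hP : ∀ i < t, P (i + 1) → ¬ P i → ¬ (S (i + 1) ↔ S i)) :
        blockMix k t P γ x ∈ GammaSet m n :=
      mem_gammaSet_of_mono hγ hx
        (strictMono_blockMix hγ.1 hbd hx.1 hγx fun i hi h1 h2 => hσ _ (hU i hi (hP i hi h1 h2)))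
        (le_blockMix hγx P) (blockMix_le hγx P)
    exact ⟨_, hmix S fun _ _ => by tauto, _, hmix (¬ S ·) fun _ _ => by tauto,
      le_blockMix hγx _, le_blockMix hγx _, fun i hi => zetaT_not_le_blockMix hbd x hi,
      fun i hi hTi => zetaT_not_le_blockMix (P := (¬ S ·)) hbd x hi hTi,
      (blockMix_sup_blockMix_not hbd hγx S).symm⟩
  · rintro ⟨ξ, hξ, ν, hν, hγξ, hγν, hξS, hνT, rfl⟩
    refine ⟨sup_mem_gammaSet hξ hν, hγξ.trans le_sup_left, ?_⟩
    rintro j ⟨hj1, hjt, hSS⟩ hσ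
    obtain ⟨i, rfl⟩ : ∃ i, j = i + 1 := ⟨j - 1, by omega⟩
    simp only [add_tsub_cancel_right] at hSS
    have hζ {β : Fin m → ℕ} (hβ : sigmaT m n γ k (i + 1) ≤ β) :
        zetaT m γ k i ≤ β ∧ zetaT m γ k (i + 1) ≤ β :=
      ⟨(zetaT_le_sigmaT_succ hγ (hbd.lt_succ hjt)).trans hβ,
        (zetaT_le_sigmaT hγ (hbd.lt_succ hjt)).trans hβ⟩
    rcases sigmaT_le_or_of_le_sup hγ.1 hbd hξ.1 hν.1 hγξ hγν hj1 hjt hσ with hσξ | hσν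
    · by_cases hSi : S (i + 1)
      · exact hξS _ hjt hSi (hζ hσξ).2
      · exact hξS i (by omega) (by tauto) (hζ hσξ).1
    · by_cases hSi : S (i + 1)
      · exact hνT i (by omega) (by tauto) (hζ hσν).1
      · exact hνT _ hjt hSi (hζ hσν).2

/-- For every `1 ≤ h ≤ κ−κ'`, the set of `β ∈ Γ(m,n)` with
`β ≥ γ` and `β ≱ σ_k` for all `k ∈ U_h` coincides with the set of all `ξ ⊔ ν`
with `ξ, ν ∈ Γ(m,n)`, `ξ, ν ≥ γ`, `ξ ≱ ζ_i` for `i ∈ S_h` and `ν ≱ ζ_j` for `j ∈ T_h`. -/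
theorem not_ge_sigma_set_eq_sup_set {m n : ℕ} (hm : 0 < m) (hmn : m ≤ n)
    (γ : Fin m → ℕ) (hγ : γ ∈ GammaSet m n)
    (hγtop : γ ≠ fun j : Fin m => n - m + 1 + (j : ℕ))
    (t : ℕ) (k : ℕ → ℕ) (hbd : IsBlockData m n γ t k)
    (h : ℕ) (h1 : 1 ≤ h) (h2 : h ≤ kappaMax m n γ t k - kappaMin m n γ t k) :
    {β | β ∈ GammaSet m n ∧ γ ≤ β ∧
        ∀ j, memU m n γ t k h j → ¬ sigmaT m n γ k j ≤ β} =
    {x | ∃ ξ ∈ GammaSet m n, ∃ ν ∈ GammaSet m n, γ ≤ ξ ∧ γ ≤ ν ∧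
        (∀ i, i ≤ t → memS m n γ t k h i → ¬ zetaT m γ k i ≤ ξ) ∧
        (∀ j, j ≤ t → ¬ memS m n γ t k h j → ¬ zetaT m γ k j ≤ ν) ∧
        x = ξ ⊔ ν} :=
  not_ge_sigma_set_eq_sup_set_general γ hγ t k hbd h
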